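/- arXiv:2412.04312 — 3 statements merged into one kernel-verified Lean document; each statement's English description precedes it below -/
import Mathlib

section
/- Let M be a metric space with base point 0, r > 0, and h : M → ℝ a Lipschitz function with Lipschitz constant L such that h(x) = 0 whenever d(x,0) > r. Then for all x ≠ y in M, d(y,0)·|h(x)-h(y)| / d(x,y) ≤ 2(rL + |h(0)|). -/
/-- The boundedness estimate for `g(x,y) = d(y,0)·|Φh(x,y)|` when `h` is `L`-Lipschitz and
vanishes outside the ball `B(0,r)`. -/
theorem stmt4 {M : Type*} [MetricSpace M] (e : M) (r L : ℝ) (hr : 0 < r)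
    (h : M → ℝ) (hL : ∀ a b : M, |h a - h b| ≤ L * dist a b)
    (hsupp : ∀ x : M, r < dist x e → h x = 0)
    (x y : M) (hxy : x ≠ y) :
    dist y e * |h x - h y| / dist x y ≤ 2 * (r * L + |h e|) := by
  have hd : 0 < dist x y := dist_pos.mpr hxy
  have hL0 : 0 ≤ L := by
    have h1 := (abs_nonneg (h x - h y)).trans (hL x y)
    nlinarith
  have hye : 0 ≤ dist y e := dist_nonneg
  have hhe : 0 ≤ |h e| := abs_nonneg _
  rw [div_le_iff₀ hd]
  by_cases hcase : dist y e ≤ 2 * r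
  · have h1 := hL x y
    have h2 := abs_nonneg (h x - h y)
    nlinarith
  · push_neg at hcase
    have hy0 : h y = 0 := hsupp y (by linarith)
    by_cases hx : r < dist x e
    · have hx0 : h x = 0 := hsupp x hx
      rw [hx0, hy0]
      simp
      nlinarith [mul_nonneg (mul_nonneg hr.le hL0) hd.le, mul_nonneg hhe hd.le]
    · push_neg at hx
      have htri : dist y e ≤ dist y x + dist x e := dist_triangle y x e
      rw [dist_comm y x] at htri
      have h1 : dist y e ≤ 2 * dist x y := by linarith
      have h2 : |h x - h y| ≤ r * L + |h e| := by
        rw [hy0, sub_zero]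
        calc |h x| = |(h x - h e) + h e| := by ring_nf
          _ ≤ |h x - h e| + |h e| := abs_add_le _ _
          _ ≤ L * dist x e + |h e| := by linarith [hL x e]
          _ ≤ r * L + |h e| := by nlinarith
      have h3 := abs_nonneg (h x - h y)
      nlinarith
end

section
/- Let X be a real normed space and x an extreme point of the closed unit ball of X with ‖x‖ = 1. Suppose x = Σₙ xₙ (a norm-convergent series) with Σₙ ‖xₙ‖ = 1. Then for every n, xₙ = ‖xₙ‖ · x. -/
/-!
Split off one term: `x = xₙ + (x - xₙ)` with `‖xₙ‖ + ‖x - xₙ‖ = 1` (at most `1` by the series,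
at least `‖x‖ = 1` by the triangle inequality). So `x` is the convex combination with weights
`‖xₙ‖`, `‖x - xₙ‖` of two normalized points of the ball, and extremality forces `xₙ / ‖xₙ‖ = x`.
-/

open Metric

theorem HasSum.norm_sub_le_of_hasSum_norm {ι E : Type*} [SeminormedAddCommGroup E]
    [DecidableEq ι] {f : ι → E} {a : E} {s : ℝ} (hf : HasSum f a)
    (hs : HasSum (fun i => ‖f i‖) s) (i : ι) : ‖a - f i‖ ≤ s - ‖f i‖ := by
  refine (hf.sub (hasSum_ite_eq i (f i))).norm_le_of_bounded (hs.sub (hasSum_ite_eq i ‖f i‖))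
    fun j => ?_
  split_ifs with hj
  · simp [hj]
  · simp

theorem eq_norm_smul_of_add_eq_of_mem_extremePoints_closedBall {X : Type*}
    [NormedAddCommGroup X] [NormedSpace ℝ X] {x y z : X}
    (hx : x ∈ (closedBall (0 : X) 1).extremePoints ℝ) (hyz : y + z = x)
    (hnorm : ‖y‖ + ‖z‖ = 1) : y = ‖y‖ • x := by
  rcases (norm_nonneg y).eq_or_lt with hy | hy
  · rw [← hy, zero_smul, ← norm_eq_zero, hy]
  rcases (norm_nonneg z).eq_or_lt with hz | hz
  · obtain rfl : z = 0 := norm_eq_zero.mp hz.symm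
    rw [norm_zero, add_zero] at hnorm
    rw [← hyz, add_zero, hnorm, one_smul]
  have hunit : ∀ w : X, 0 < ‖w‖ → ‖w‖⁻¹ • w ∈ closedBall (0 : X) 1 := fun w hw => by
    rw [mem_closedBall_zero_iff, norm_smul, norm_inv, norm_norm, inv_mul_cancel₀ hw.ne']
  have hseg : x ∈ openSegment ℝ (‖y‖⁻¹ • y) (‖z‖⁻¹ • z) :=
    ⟨‖y‖, ‖z‖, hy, hz, hnorm, by rw [smul_inv_smul₀ hy.ne', smul_inv_smul₀ hz.ne', hyz]⟩
  rw [← hx.2 (hunit y hy) (hunit z hz) hseg, smul_inv_smul₀ hy.ne']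

theorem stmt5_general {X : Type*} [NormedAddCommGroup X] [NormedSpace ℝ X]
    (x : X) (hx : x ∈ (Metric.closedBall (0 : X) 1).extremePoints ℝ)
    (hnorm : ‖x‖ = 1) (xs : ℕ → X) (hsum : HasSum xs x)
    (htot : ∑' n, ‖xs n‖ = 1) :
    ∀ n, xs n = ‖xs n‖ • x := by
  intro n
  have hns : HasSum (fun n => ‖xs n‖) 1 := by
    refine htot ▸ (Summable.hasSum ?_)
    by_contra h
    simp [tsum_eq_zero_of_not_summable h] at htot
  have htail := hsum.norm_sub_le_of_hasSum_norm hns n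
  have htri : ‖x‖ ≤ ‖xs n‖ + ‖x - xs n‖ := norm_le_insert' x (xs n)
  exact eq_norm_smul_of_add_eq_of_mem_extremePoints_closedBall hx (add_sub_cancel (xs n) x)
    (by linarith)

/-- If an extreme point `x` of the unit ball, of norm one, is written as a norm-convergent
series `x = Σₙ xₙ` with `Σₙ ‖xₙ‖ = 1`, then each `xₙ` is `‖xₙ‖ • x`. -/
theorem stmt5 {X : Type*} [NormedAddCommGroup X] [NormedSpace ℝ X]
    (x : X) (hx : x ∈ (Metric.closedBall (0 : X) 1).extremePoints ℝ)
    (hnorm : ‖x‖ = 1) (xs : ℕ → X) (hsum : HasSum xs x)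
    (hns : Summable fun n => ‖xs n‖) (htot : ∑' n, ‖xs n‖ = 1) :
    ∀ n, xs n = ‖xs n‖ • x :=
  stmt5_general x hx hnorm xs hsum htot
end

section
/- Let M be a metric space with base point 0, K ⊆ M a compact set, f : M → ℝ a 1-Lipschitz function with f(0) = 0, and suppose (gₙ) is a sequence of Lipschitz functions on K with |gₙ(x) - f(x)| ≤ 1/n² for all x ∈ K and Lipschitz constants at most 1 + 1/n. Define fₙ on the set {x : d(x,K) ≤ 1/n²} ∪ {x : d(x,K) ≥ 5/n} by fₙ(x) = hₙ(x) if d(x,K) ≤ 1/n² and fₙ(x) = f(x) if d(x,K) ≥ 5/n, where hₙ is any (1+1/n)-Lipschitz extension of gₙ to M. Then fₙ is (1 + 1/n)-Lipschitz on its domain; that is, if d(x,K) ≤ 1/n² and d(y,K) ≥ 5/n then |fₙ(x) - fₙ(y)| ≤ (1 + 1/n)·d(x,y). -/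
/-- The gluing estimate in the proof of Proposition 4.5 (pr:p1u compact approx): the two
partial definitions of `fₙ` (given by `hₙ` near `K` and by `f` far from `K`) are compatible
with Lipschitz constant `1 + 1/n`. -/
theorem stmt14 {M : Type*} [MetricSpace M] (e : M) (K : Set M) (hK : IsCompact K)
    (f : M → ℝ) (hf : LipschitzWith 1 f) (hf0 : f e = 0)
    (n : ℕ) (hn : 1 ≤ n)
    (g h : M → ℝ)
    (hg : ∀ a ∈ K, |g a - f a| ≤ 1 / (n : ℝ) ^ 2)
    (hglip : ∀ a ∈ K, ∀ b ∈ K, |g a - g b| ≤ (1 + 1 / (n : ℝ)) * dist a b)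
    (hhlip : ∀ a b : M, |h a - h b| ≤ (1 + 1 / (n : ℝ)) * dist a b)
    (hext : ∀ a ∈ K, h a = g a)
    (x y : M)
    (hx : Metric.infDist x K ≤ 1 / (n : ℝ) ^ 2)
    (hy : 5 / (n : ℝ) ≤ Metric.infDist y K) :
    |h x - f y| ≤ (1 + 1 / (n : ℝ)) * dist x y := by
  have hn0 : (0:ℝ) < n := by exact_mod_cast Nat.pos_of_ne_zero (by omega)
  set r : ℝ := 1 / (n : ℝ) with hr
  have hr0 : 0 < r := by positivity
  have hr1 : r ≤ 1 := by
    rw [hr, div_le_one hn0]; exact_mod_cast hn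
  have hr2 : 1 / (n : ℝ) ^ 2 = r * r := by rw [hr]; ring
  -- K nonempty
  have hKne : K.Nonempty := by
    by_contra hemp
    rw [Set.not_nonempty_iff_eq_empty] at hemp
    rw [hemp, Metric.infDist_empty] at hy
    have : (0:ℝ) < 5 / n := by positivity
    linarith
  obtain ⟨k, hkK, hk⟩ := hK.exists_infDist_eq_dist hKne x
  have hdxk : dist x k ≤ r * r := by rw [← hr2, ← hk]; exact hx
  have h1 : |h x - h k| ≤ (1 + r) * dist x k := hhlip x k
  have h2 : |g k - f k| ≤ r * r := by rw [← hr2]; exact hg k hkK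
  have h3 : |f k - f y| ≤ dist k y := by
    have := hf.dist_le_mul k y
    simpa [Real.dist_eq] using this
  have h4 : dist k y ≤ dist x k + dist x y := by
    have := dist_triangle k x y
    rw [dist_comm k x] at this; linarith
  have h5 : 5 / (n:ℝ) - dist x k ≤ dist x y := by
    have h6 : Metric.infDist y K ≤ dist y k := Metric.infDist_le_dist_of_mem hkK
    have h7 : dist y k ≤ dist y x + dist x k := dist_triangle y x k
    rw [dist_comm y x] at h7
    linarith
  have h5' : 5 * r - dist x k ≤ dist x y := by
    have : 5 / (n:ℝ) = 5 * r := by rw [hr]; ring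
    linarith [this ▸ h5]
  have hhk : h k = g k := hext k hkK
  have key : |h x - f y| ≤ |h x - h k| + |g k - f k| + |f k - f y| := by
    rw [hhk] at *
    calc |h x - f y| = |(h x - g k) + (g k - f k) + (f k - f y)| := by ring_nf
      _ ≤ |h x - g k| + |g k - f k| + |f k - f y| := by
          exact (abs_add_le _ _).trans (by gcongr; exact abs_add_le _ _)
  have hd0 : 0 ≤ dist x k := dist_nonneg
  nlinarith [key, h1, h2, h3, h4, h5', mul_nonneg hd0 hr0.le]
end
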